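/- arXiv:1008.2309 — 2 statements merged into one kernel-verified Lean document; each statement's English description precedes it below -/
import Mathlib

section
/- Let $x, y_1, \dots, y_N$ be pairwise commuting elements of a (unital, associative) algebra over the rationals (or assume the algebra is a commutative $\mathbb{Q}$-algebra). Then $\sum_{n_0, \dots, n_N \geq 0} \frac{x^{n_0} (x+y_1)^{n_1} \cdots (x+y_N)^{n_N}}{(n_0 + \cdots + n_N + N)!} = e^x \sum_{n_1, \dots, n_N \geq 0} \frac{y_1^{n_1} \cdots y_N^{n_N}}{\left( \sum_{i=1}^N (n_i+1) \right)!}$, where all sums converge (e.g. interpret the identity as an identity of formal power series in $x, y_1, \dots, y_N$, or for real/complex numbers). -/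
/-!
The series `∑ n, (∏ i, z i ^ n i) / (∑ i, n i + N)!` is the divided difference of `exp` at the
nodes `z 0, …, z N`, so translating every node by `c` multiplies it by `e ^ c`; the lemma is the
case of the nodes `0, y 0, …, y (N - 1)`. For the translation law, expand each `(c + z i) ^ n i`
binomially and regroup the absolutely convergent double series by the total degree `K` in `c`.
The binomial coefficients collected in this way sum to `(K + ∑ i, m i + N).choose K` (compare
the coefficients of `X ^ K` in `∏ i, (1 - X)⁻¹ ^ (m i + 1) = (1 - X)⁻¹ ^ (∑ i, m i + N + 1)`),
so the coefficient of `c ^ K * ∏ i, z i ^ m i` becomes `1 / (K! * (∑ i, m i + N)!)`.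
-/

open Finset
open scoped Nat

theorem summable_pi_prod_of_nonneg {ι κ : Type*} [Fintype ι] {f : ι → κ → ℝ}
    (hf₀ : ∀ i k, 0 ≤ f i k) (hf : ∀ i, Summable (f i)) :
    Summable fun n : ι → κ => ∏ i, f i (n i) := by
  classical
  have hprod₀ (n : ι → κ) : 0 ≤ ∏ i, f i (n i) := prod_nonneg fun i _ => hf₀ i (n i)
  refine summable_of_sum_le (c := ∏ i, ∑' k, f i k) hprod₀ fun S => ?_
  calc ∑ n ∈ S, ∏ i, f i (n i)
      ≤ ∑ n ∈ Fintype.piFinset fun i => S.image (· i), ∏ i, f i (n i) :=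
        sum_le_sum_of_subset_of_nonneg
          (fun n hn => Fintype.mem_piFinset.2 fun i => mem_image_of_mem _ hn) fun n _ _ => hprod₀ n
    _ = ∏ i, ∑ k ∈ S.image (· i), f i k := (prod_univ_sum _ _).symm
    _ ≤ ∏ i, ∑' k, f i k := prod_le_prod (fun i _ => sum_nonneg fun k _ => hf₀ i k)
        fun i _ => (hf i).sum_le_tsum _ fun k _ => hf₀ i k

theorem tsum_eq_tsum_sum_fiber {α β γ : Type*} [NormedAddCommGroup α] [CompleteSpace α]
    {f : β → α} (hf : Summable f) (g : β → γ) (t : γ → Finset β)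
    (ht : ∀ b c, b ∈ t c ↔ g b = c) :
    ∑' b, f b = ∑' c, ∑ b ∈ t c, f b := by
  refine (hf.hasSum.tsum_fiberwise g).tsum_eq.symm.trans (tsum_congr fun c => ?_)
  have hfiber : g ⁻¹' {c} = ↑(t c) := by ext b; simp [ht]
  rw [hfiber, Finset.tsum_subtype']

theorem prod_factorial_le_factorial_sum_add {ι : Type*} (s : Finset ι) (n : ι → ℕ) (N : ℕ) :
    ∏ i ∈ s, (n i)! ≤ ((∑ i ∈ s, n i) + N)! :=
  Nat.le_of_dvd (Nat.factorial_pos _) ((Nat.prod_factorial_dvd_factorial_sum s n).trans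
    (Nat.factorial_dvd_factorial (Nat.le_add_right _ _)))

theorem map_finsuppAntidiag_univ_eq_antidiagonalTuple (M K : ℕ) :
    (finsuppAntidiag (univ : Finset (Fin M)) K).map Finsupp.equivFunOnFinite.toEmbedding =
      Finset.Nat.antidiagonalTuple M K := by
  ext k
  simp [mem_map_equiv, Finset.Nat.mem_antidiagonalTuple]

theorem sum_antidiagonalTuple_prod_choose (N : ℕ) (m : Fin (N + 1) → ℕ) (K : ℕ) :
    ∑ k ∈ Finset.Nat.antidiagonalTuple (N + 1) K, ∏ i, (k i + m i).choose (k i) =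
      (K + ((∑ i, m i) + N)).choose K := by
  classical
  have hprod : ∏ i, (PowerSeries.mk 1 : PowerSeries ℤ) ^ (m i + 1) =
      PowerSeries.mk 1 ^ ((∑ i, m i + N) + 1) := by
    rw [prod_pow_eq_pow_sum, sum_add_distrib]
    simp [add_assoc]
  have hcoeff := congrArg (PowerSeries.coeff K) hprod
  simp only [PowerSeries.mk_one_pow_eq_mk_choose_add, PowerSeries.coeff_prod,
    PowerSeries.coeff_mk] at hcoeff
  calc ∑ k ∈ Finset.Nat.antidiagonalTuple (N + 1) K, ∏ i, (k i + m i).choose (k i)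
      = ∑ l ∈ finsuppAntidiag univ K, ∏ i, (m i + l i).choose (m i) := by
        rw [← map_finsuppAntidiag_univ_eq_antidiagonalTuple, sum_map]
        refine sum_congr rfl fun l _ => prod_congr rfl fun i _ => ?_
        rw [Nat.choose_symm_add, add_comm]
        rfl
    _ = ((∑ i, m i + N) + K).choose (∑ i, m i + N) := by exact_mod_cast hcoeff
    _ = (K + ((∑ i, m i) + N)).choose K := by rw [Nat.choose_symm_add, add_comm]

theorem norm_prod_div_factorial_le {𝕜 ι : Type*} [RCLike 𝕜] [Fintype ι] (a : ι → 𝕜)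
    (n : ι → ℕ) (N : ℕ) : ‖(∏ i, a i) / (((∑ i, n i) + N)! : 𝕜)‖ ≤ ∏ i, ‖a i‖ / (n i)! := by
  rw [norm_div, norm_prod, RCLike.norm_natCast, prod_div_distrib]
  gcongr
  exact_mod_cast prod_factorial_le_factorial_sum_add univ n N

section ExpDivDiff

variable {N : ℕ}

noncomputable def expDivDiffTerm (z : Fin (N + 1) → ℂ) (n : Fin (N + 1) → ℕ) : ℂ :=
  (∏ i, z i ^ n i) / (Nat.factorial ((∑ i, n i) + N) : ℂ)

theorem summable_norm_expDivDiffTerm (z : Fin (N + 1) → ℂ) :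
    Summable fun n => ‖expDivDiffTerm z n‖ := by
  refine (summable_pi_prod_of_nonneg (fun i k => by positivity)
    fun i => Real.summable_pow_div_factorial ‖z i‖).of_nonneg_of_le (fun _ => norm_nonneg _)
    fun n => ?_
  simpa only [expDivDiffTerm, norm_pow] using norm_prod_div_factorial_le (fun i => z i ^ n i) n N

/-- The summand at `(k, m)` after expanding every `(c + z i) ^ (k i + m i)` binomially. -/
noncomputable def expDivDiffBinomTerm (c : ℂ) (z : Fin (N + 1) → ℂ)
    (p : (Fin (N + 1) → ℕ) × (Fin (N + 1) → ℕ)) : ℂ :=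
  (∏ i, ((p.1 i + p.2 i).choose (p.1 i) : ℂ) * c ^ p.1 i * z i ^ p.2 i) /
    (Nat.factorial ((∑ i, (p.1 i + p.2 i)) + N) : ℂ)

theorem summable_norm_expDivDiffBinomTerm (c : ℂ) (z : Fin (N + 1) → ℂ) :
    Summable fun p => ‖expDivDiffBinomTerm c z p‖ := by
  have hsummable (w : Fin (N + 1) → ℂ) :=
    summable_pi_prod_of_nonneg (fun i k => by positivity)
      fun i => Real.summable_pow_div_factorial ‖w i‖
  refine ((hsummable fun _ => c).mul_of_nonneg (hsummable z) (fun _ => by positivity)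
    fun _ => by positivity).of_nonneg_of_le (fun _ => norm_nonneg _) fun p => ?_
  refine (norm_prod_div_factorial_le _ _ N).trans_eq ?_
  rw [← prod_mul_distrib]
  refine prod_congr rfl fun i _ => ?_
  rw [norm_mul, norm_mul, norm_pow, norm_pow, RCLike.norm_natCast, Nat.cast_add_choose]
  field_simp

theorem sum_expDivDiffBinomTerm_add_eq (c : ℂ) (z : Fin (N + 1) → ℂ) (n : Fin (N + 1) → ℕ) :
    ∑ p ∈ (Fintype.piFinset fun i => antidiagonal (n i)).map
        (Equiv.arrowProdEquivProdArrow _ _ _).toEmbedding,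
      expDivDiffBinomTerm c z p = expDivDiffTerm (fun i => c + z i) n := by
  classical
  have hbinom (i : Fin (N + 1)) : (c + z i) ^ n i =
      ∑ p ∈ antidiagonal (n i), ((p.1 + p.2).choose p.1 : ℂ) * c ^ p.1 * z i ^ p.2 := by
    rw [(Commute.all _ _).add_pow']
    refine sum_congr rfl fun p hp => ?_
    rw [mem_antidiagonal.1 hp, nsmul_eq_mul, mul_assoc]
  rw [sum_map, expDivDiffTerm, Finset.prod_congr rfl fun i _ => hbinom i, prod_univ_sum, sum_div]
  refine sum_congr rfl fun q hq => ?_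
  have hsum : ∑ i, ((q i).1 + (q i).2) = ∑ i, n i :=
    sum_congr rfl fun i _ => mem_antidiagonal.1 (Fintype.mem_piFinset.1 hq i)
  simp [expDivDiffBinomTerm, Equiv.arrowProdEquivProdArrow, hsum]

theorem sum_expDivDiffBinomTerm_antidiagonalTuple (c : ℂ) (z : Fin (N + 1) → ℂ) (K : ℕ)
    (m : Fin (N + 1) → ℕ) :
    ∑ k ∈ Finset.Nat.antidiagonalTuple (N + 1) K, expDivDiffBinomTerm c z (k, m) =
      c ^ K / K ! * expDivDiffTerm z m := by
  have hterm : ∀ k ∈ Finset.Nat.antidiagonalTuple (N + 1) K, expDivDiffBinomTerm c z (k, m) =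
      (∏ i, ((k i + m i).choose (k i) : ℂ)) * c ^ K * (∏ i, z i ^ m i) /
        (Nat.factorial (K + ((∑ i, m i) + N)) : ℂ) := by
    intro k hk
    have hK : ∑ i, k i = K := Finset.Nat.mem_antidiagonalTuple.1 hk
    rw [expDivDiffBinomTerm, prod_mul_distrib, prod_mul_distrib, prod_pow_eq_pow_sum, hK,
      sum_add_distrib, hK, add_assoc]
  rw [sum_congr rfl hterm, ← sum_div, ← sum_mul, ← sum_mul]
  have hchoose : ∑ k ∈ Finset.Nat.antidiagonalTuple (N + 1) K,
      ∏ i, ((k i + m i).choose (k i) : ℂ) = ((K + ((∑ i, m i) + N)).choose K : ℂ) := by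
    exact_mod_cast sum_antidiagonalTuple_prod_choose N m K
  have hfactorial : ((K + ((∑ i, m i) + N))! : ℂ) ≠ 0 :=
    Nat.cast_ne_zero.2 (Nat.factorial_ne_zero _)
  rw [hchoose, Nat.cast_add_choose, expDivDiffTerm]
  field_simp

theorem tsum_expDivDiffTerm_const_add (c : ℂ) (z : Fin (N + 1) → ℂ) :
    ∑' n, expDivDiffTerm (fun i => c + z i) n = Complex.exp c * ∑' n, expDivDiffTerm z n := by
  have hbinom : Summable (expDivDiffBinomTerm c z) :=
    (summable_norm_expDivDiffBinomTerm c z).of_norm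
  have hexp : Summable fun K : ℕ => ‖c ^ K / (K ! : ℂ)‖ := by
    simpa only [norm_div, norm_pow, RCLike.norm_natCast] using
      Real.summable_pow_div_factorial ‖c‖
  calc ∑' n, expDivDiffTerm (fun i => c + z i) n
      = ∑' p, expDivDiffBinomTerm c z p := by
        rw [tsum_eq_tsum_sum_fiber hbinom (fun p => p.1 + p.2) _ fun p n => ?_]
        · exact tsum_congr fun n => (sum_expDivDiffBinomTerm_add_eq c z n).symm
        · simp [mem_map_equiv, funext_iff, Equiv.arrowProdEquivProdArrow]
    _ = ∑' q : ℕ × (Fin (N + 1) → ℕ), c ^ q.1 / q.1 ! * expDivDiffTerm z q.2 := by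
        rw [tsum_eq_tsum_sum_fiber hbinom (fun p => (∑ i, p.1 i, p.2))
          (fun q => Finset.Nat.antidiagonalTuple (N + 1) q.1 ×ˢ {q.2}) fun p q => ?_]
        · refine tsum_congr fun q => ?_
          rw [sum_product, ← sum_expDivDiffBinomTerm_antidiagonalTuple]
          simp only [sum_singleton]
        · simp [Prod.ext_iff, Finset.Nat.mem_antidiagonalTuple, eq_comm]
    _ = (∑' K : ℕ, c ^ K / K !) * ∑' m, expDivDiffTerm z m :=
        (tsum_mul_tsum_of_summable_norm hexp (summable_norm_expDivDiffTerm z)).symm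
    _ = Complex.exp c * ∑' n, expDivDiffTerm z n := by
        rw [Complex.exp_eq_exp_ℂ, NormedSpace.exp_eq_tsum_div]

theorem tsum_expDivDiffTerm_cons_zero (y : Fin N → ℂ) :
    ∑' n, expDivDiffTerm (Fin.cons 0 y) n =
      ∑' m : Fin N → ℕ, (∏ i, y i ^ m i) / (Nat.factorial (∑ i, (m i + 1)) : ℂ) := by
  have hsupport : Function.support (expDivDiffTerm (Fin.cons 0 y)) ⊆
      Set.range fun m : Fin N → ℕ => (Fin.cons 0 m : Fin (N + 1) → ℕ) := by
    intro n hn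
    have hn0 : n 0 = 0 := by
      by_contra h
      simp [expDivDiffTerm, Fin.prod_univ_succ, zero_pow h] at hn
    exact ⟨Fin.tail n, by simp only [← hn0, Fin.cons_self_tail]⟩
  rw [← (Fin.cons_right_injective 0).tsum_eq hsupport]
  refine tsum_congr fun m => ?_
  have hdeg : (∑ i, (Fin.cons 0 m : Fin (N + 1) → ℕ) i) + N = ∑ i, (m i + 1) := by
    simp [Fin.sum_univ_succ, sum_add_distrib]
  rw [expDivDiffTerm, hdeg, Fin.prod_univ_succ]
  simp

end ExpDivDiff

/-- Lemma 1 of the paper, stated for complex numbers: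
`∑_{n_0,…,n_N} x^{n_0}(x+y_1)^{n_1}⋯(x+y_N)^{n_N}/(n_0+⋯+n_N+N)!
  = e^x ∑_{n_1,…,n_N} y_1^{n_1}⋯y_N^{n_N}/((n_1+1)+⋯+(n_N+1))!`. -/
theorem stmt0 (N : ℕ) (x : ℂ) (y : Fin N → ℂ) :
    (∑' n : Fin (N + 1) → ℕ,
        (x ^ n 0 * ∏ i : Fin N, (x + y i) ^ n i.succ) /
          (Nat.factorial ((∑ i, n i) + N) : ℂ)) =
      Complex.exp x *
        ∑' m : Fin N → ℕ,
          (∏ i : Fin N, y i ^ m i) / (Nat.factorial (∑ i, (m i + 1)) : ℂ) := by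
  have hcons (n : Fin (N + 1) → ℕ) :
      (x ^ n 0 * ∏ i : Fin N, (x + y i) ^ n i.succ) / (Nat.factorial ((∑ i, n i) + N) : ℂ) =
        expDivDiffTerm (fun i => x + (Fin.cons 0 y : Fin (N + 1) → ℂ) i) n := by
    simp [expDivDiffTerm, Fin.prod_univ_succ]
  simp_rw [hcons]
  rw [tsum_expDivDiffTerm_const_add, tsum_expDivDiffTerm_cons_zero]
end

section
/- Let $C$ and $D$ be elements of a unital complex Banach algebra (or $n \times n$ complex matrices). Then for every natural number $N$, $\frac{1}{N!} \left.\left( \frac{d}{d\lambda} \right)^N e^{C + \lambda D}\right|_{\lambda = 0} = \sum_{n_0, \dots, n_N \geq 0} \frac{C^{n_0} D\, C^{n_1} D \cdots D\, C^{n_N}}{(n_0 + n_1 + \cdots + n_N + N)!}$, where the series on the right converges absolutely. -/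
/-!
Distributing `(C + λD)^k` gives `∑_N λ^N wordSum N (k - N)`, where `wordSum N m` sums all words
`C^{n₀} D C^{n₁} ⋯ D C^{n_N}` with `n₀ + ⋯ + n_N = m`. Inserting this into the exponential
series yields a double series over `(N, m)`. It converges absolutely: each word is bounded in norm
by the same word in the commuting reals `‖C‖` and `max ‖1‖ 1 * ‖D‖` (times `max ‖1‖ 1`), and for
commuting variables the same expansion regroups the double series into an exponential series.
Summing over `m` first exhibits `λ ↦ exp (C + λD)` as an everywhere convergent power series
`∑_N λ^N expCoeff N`, so its `N`-th derivative at `0` is `N! expCoeff N`; and `expCoeff N` is the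
series over tuples of the statement, grouped by `n₀ + ⋯ + n_N`.
-/

open NormedSpace Finset Finset.Nat
open scoped Nat

theorem Finset.Nat.sum_antidiagonalTuple_succ {M : Type*} [AddCommMonoid M] (k m : ℕ)
    (f : (Fin (k + 1) → ℕ) → M) :
    ∑ n ∈ antidiagonalTuple (k + 1) m, f n
      = ∑ p ∈ antidiagonal m, ∑ t ∈ antidiagonalTuple k p.2, f (Fin.cons p.1 t) := by
  have hval : (antidiagonalTuple (k + 1) m).val
      = (antidiagonal m).val.bind fun p => (antidiagonalTuple k p.2).val.map (Fin.cons p.1) := by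
    simp only [antidiagonalTuple, Multiset.Nat.antidiagonalTuple, List.Nat.antidiagonalTuple,
      ← Multiset.coe_bind]
    rfl
  rw [Finset.sum_eq_multiset_sum, hval, Multiset.map_bind, Multiset.sum_bind]
  simp only [Multiset.map_map, Function.comp_def]
  rfl

theorem HasSum.sum_finset_of_sigmaEquiv {ι β E : Type*} {s : ι → Finset β}
    (e : (Σ i, s i) ≃ β) (he : ∀ x, e x = x.2) [AddCommMonoid E] [TopologicalSpace E]
    [ContinuousAdd E] [RegularSpace E] {f : β → E} {a : E} (hf : HasSum f a) :
    HasSum (fun i => ∑ b ∈ s i, f b) a :=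
  (e.hasSum_iff.2 hf).sigma fun i => by
    simpa only [Function.comp_def, he, sum_coe_sort] using hasSum_fintype fun b : s i => f b

theorem summable_iff_summable_sum_finset_of_sigmaEquiv {ι β : Type*} {s : ι → Finset β}
    (e : (Σ i, s i) ≃ β) (he : ∀ x, e x = x.2) {f : β → ℝ} (hf : 0 ≤ f) :
    Summable f ↔ Summable fun i => ∑ b ∈ s i, f b := by
  rw [← e.summable_iff, summable_sigma_of_nonneg (f := f ∘ e) fun x => hf (e x)]
  simp only [Function.comp_def, he, tsum_fintype, sum_coe_sort]
  exact and_iff_right fun _ => .of_finite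

theorem iteratedDeriv_zero_eq_factorial_smul_of_hasSum {𝕜 E : Type*} [NontriviallyNormedField 𝕜]
    [NormedAddCommGroup E] [NormedSpace 𝕜 E] [CompleteSpace E] {f : 𝕜 → E} {a : ℕ → E}
    (hf : ∀ z, HasSum (fun n => z ^ n • a n) (f z)) (n : ℕ) :
    iteratedDeriv n f 0 = n ! • a n := by
  let p : FormalMultilinearSeries 𝕜 𝕜 E := fun n =>
    ContinuousMultilinearMap.mkPiRing 𝕜 (Fin n) (a n)
  have hp : HasFPowerSeriesOnBall f p 0 1 :=
    { r_le := p.le_radius_of_tendsto (l := 0) <| by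
        simpa [p, ContinuousMultilinearMap.norm_mkPiRing] using
          (hf 1).summable.tendsto_atTop_zero.norm
      r_pos := one_pos
      hasSum := fun {y} _ => by simpa [p] using hf y }
  rw [iteratedDeriv_eq_iteratedFDeriv, ← hp.factorial_smul]
  simp [p]

namespace PerturbedExp

section Words

variable {A : Type*} [Semiring A] (C D : A)

def word (N : ℕ) (n : Fin (N + 1) → ℕ) : A :=
  C ^ n 0 * (List.ofFn fun i : Fin N => D * C ^ n i.succ).prod

def wordSum (N m : ℕ) : A :=
  ∑ n ∈ antidiagonalTuple (N + 1) m, word C D N n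

theorem word_zero (N : ℕ) : word C D N 0 = D ^ N := by
  simp [word, List.ofFn_const]

theorem word_cons_zero (N : ℕ) (t : Fin (N + 1) → ℕ) :
    word C D (N + 1) (Fin.cons 0 t) = D * word C D N t := by
  simp [word, List.ofFn_succ, mul_assoc]

theorem word_cons_succ (N a : ℕ) (t : Fin N → ℕ) :
    word C D N (Fin.cons (a + 1) t) = C * word C D N (Fin.cons a t) := by
  simp [word, pow_succ', mul_assoc]

theorem wordSum_zero_left (m : ℕ) : wordSum C D 0 m = C ^ m := by
  simp [wordSum, antidiagonalTuple_one, word]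

theorem wordSum_zero_right (N : ℕ) : wordSum C D N 0 = D ^ N := by
  simp [wordSum, antidiagonalTuple_zero_right, word_zero]

theorem wordSum_succ_succ (N m : ℕ) :
    wordSum C D (N + 1) (m + 1) = C * wordSum C D (N + 1) m + D * wordSum C D N (m + 1) := by
  simp only [wordSum, sum_antidiagonalTuple_succ (N + 1), Nat.antidiagonal_succ, sum_cons,
    sum_map, mul_sum, word_cons_zero]
  rw [add_comm]
  simp [word_cons_succ C D (N + 1)]

end Words

section Expansion

variable {R A : Type*} [CommSemiring R] [Semiring A] [Algebra R A] (C D : A)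

theorem wordSum_succ_sub_succ {k N : ℕ} (hN : N < k) :
    wordSum C D (N + 1) (k - N)
      = C * wordSum C D (N + 1) (k - (N + 1)) + D * wordSum C D N (k - N) := by
  obtain ⟨m, rfl⟩ := Nat.exists_eq_add_of_lt hN
  rw [show N + m + 1 - N = m + 1 by omega, show N + m + 1 - (N + 1) = m by omega,
    wordSum_succ_succ]

theorem add_smul_pow_eq_sum (z : R) (k : ℕ) :
    (C + z • D) ^ k = ∑ N ∈ range (k + 1), z ^ N • wordSum C D N (k - N) := by
  induction k with
  | zero => simp [wordSum_zero_left]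
  | succ k ih =>
    symm
    calc ∑ N ∈ range (k + 2), z ^ N • wordSum C D N (k + 1 - N)
        = ∑ N ∈ range k, z ^ (N + 1) • wordSum C D (N + 1) (k - N)
            + z ^ (k + 1) • wordSum C D (k + 1) 0 + wordSum C D 0 (k + 1) := by
          rw [sum_range_succ', sum_range_succ]
          simp
      _ = (∑ N ∈ range k, z ^ (N + 1) • (C * wordSum C D (N + 1) (k - (N + 1)))
              + C * wordSum C D 0 k)
            + (∑ N ∈ range k, z ^ (N + 1) • (D * wordSum C D N (k - N))
              + z ^ (k + 1) • (D * wordSum C D k 0)) := by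
          rw [sum_congr rfl fun N hN => by
              rw [wordSum_succ_sub_succ C D (mem_range.1 hN), smul_add],
            sum_add_distrib, wordSum_zero_right, wordSum_zero_right, wordSum_zero_left,
            wordSum_zero_left, pow_succ' C, pow_succ' D]
          abel
      _ = ∑ N ∈ range (k + 1), z ^ N • (C * wordSum C D N (k - N))
            + ∑ N ∈ range (k + 1), z ^ (N + 1) • (D * wordSum C D N (k - N)) := by
          rw [sum_range_succ' _ k, sum_range_succ _ k]
          simp
      _ = (C + z • D) ^ (k + 1) := by
          simp only [pow_succ' _ k, ih, add_mul, mul_sum, smul_mul_assoc, mul_smul_comm, smul_add,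
            sum_add_distrib, smul_smul, ← pow_succ]

end Expansion

section Series

variable {𝕂 A : Type*} [Field 𝕂] [Semiring A] [Algebra 𝕂 A] (C D : A)

def expTerm (z : 𝕂) (p : ℕ × ℕ) : A :=
  z ^ p.1 • ((p.2 + p.1)! : 𝕂)⁻¹ • wordSum C D p.1 p.2

variable (𝕂) in
def wordTerm (N : ℕ) (n : Fin (N + 1) → ℕ) : A :=
  ((∑ i, n i + N)! : 𝕂)⁻¹ • word C D N n

theorem sum_antidiagonal_expTerm (z : 𝕂) (k : ℕ) :
    ∑ p ∈ antidiagonal k, expTerm C D z p = (k ! : 𝕂)⁻¹ • (C + z • D) ^ k := by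
  rw [Nat.sum_antidiagonal_eq_sum_range_succ_mk, add_smul_pow_eq_sum, smul_sum]
  refine sum_congr rfl fun N hN => ?_
  rw [expTerm, smul_comm, Nat.sub_add_cancel (Nat.le_of_lt_succ (mem_range.1 hN))]

theorem sum_antidiagonalTuple_wordTerm (N m : ℕ) :
    ∑ n ∈ antidiagonalTuple (N + 1) m, wordTerm 𝕂 C D N n
      = ((m + N)! : 𝕂)⁻¹ • wordSum C D N m := by
  rw [wordSum, smul_sum]
  exact sum_congr rfl fun n hn => by rw [wordTerm, mem_antidiagonalTuple.1 hn]

end Series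

section Real

variable {c d : ℝ} (hc : 0 ≤ c) (hd : 0 ≤ d)
include hc hd

theorem word_nonneg (N : ℕ) (n : Fin (N + 1) → ℕ) : 0 ≤ word c d N n := by
  rw [word, List.prod_ofFn]
  positivity

theorem wordSum_nonneg (N m : ℕ) : 0 ≤ wordSum c d N m :=
  sum_nonneg fun n _ => word_nonneg hc hd N n

theorem expTerm_nonneg {t : ℝ} (ht : 0 ≤ t) : 0 ≤ expTerm c d t := fun p => by
  have := wordSum_nonneg hc hd p.1 p.2
  unfold expTerm
  positivity

theorem wordTerm_nonneg (N : ℕ) : 0 ≤ wordTerm ℝ c d N := fun n => by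
  have := word_nonneg hc hd N n
  unfold wordTerm
  positivity

theorem summable_expTerm_real {t : ℝ} (ht : 0 ≤ t) : Summable (expTerm c d t) := by
  rw [summable_iff_summable_sum_finset_of_sigmaEquiv HasAntidiagonal.sigmaAntidiagonalEquivProd
    (fun _ => rfl) (expTerm_nonneg hc hd ht)]
  simpa [sum_antidiagonal_expTerm, div_eq_inv_mul] using Real.summable_pow_div_factorial (c + t * d)

theorem summable_wordTerm_real (N : ℕ) : Summable (wordTerm ℝ c d N) := by
  rw [summable_iff_summable_sum_finset_of_sigmaEquiv (sigmaAntidiagonalTupleEquivTuple _)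
    (fun _ => rfl) (wordTerm_nonneg hc hd N)]
  simpa [sum_antidiagonalTuple_wordTerm, expTerm] using
    (summable_expTerm_real hc hd zero_le_one).prod_factor N

end Real

section Norm

variable {𝕂 𝔸 : Type*} [RCLike 𝕂] [NormedRing 𝔸] [NormedAlgebra 𝕂 𝔸] (C D : 𝔸)

variable (𝔸) in
/-- `‖(1 : 𝔸)‖` need not be `1` in a `NormedRing`; this constant absorbs the factors `C ^ 0`. -/
noncomputable def oneNormMax : ℝ := max ‖(1 : 𝔸)‖ 1

theorem one_le_oneNormMax : 1 ≤ oneNormMax 𝔸 := le_max_right _ _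

theorem oneNormMax_nonneg : 0 ≤ oneNormMax 𝔸 := zero_le_one.trans one_le_oneNormMax

theorem norm_pow_le_oneNormMax_mul (j : ℕ) : ‖C ^ j‖ ≤ oneNormMax 𝔸 * ‖C‖ ^ j := by
  rcases j.eq_zero_or_pos with rfl | hj
  · rw [pow_zero, pow_zero, mul_one]
    exact le_max_left _ _
  · exact (norm_pow_le' C hj).trans (le_mul_of_one_le_left (by positivity) one_le_oneNormMax)

theorem norm_word_le (N : ℕ) (n : Fin (N + 1) → ℕ) :
    ‖word C D N n‖ ≤ oneNormMax 𝔸 * word ‖C‖ (oneNormMax 𝔸 * ‖D‖) N n := by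
  have hE := oneNormMax_nonneg (𝔸 := 𝔸)
  calc ‖word C D N n‖
      ≤ ‖C ^ n 0‖ * ∏ i : Fin N, ‖D * C ^ n i.succ‖ := by
        refine (List.norm_prod_le' (l := C ^ n 0 :: List.ofFn _) (List.cons_ne_nil _ _)).trans_eq ?_
        simp [List.prod_ofFn]
    _ ≤ (oneNormMax 𝔸 * ‖C‖ ^ n 0) * ∏ i : Fin N, (‖D‖ * (oneNormMax 𝔸 * ‖C‖ ^ n i.succ)) := by
        gcongr with i
        · exact norm_pow_le_oneNormMax_mul C _
        · exact (norm_mul_le _ _).trans (by gcongr; exact norm_pow_le_oneNormMax_mul C _)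
    _ = oneNormMax 𝔸 * word ‖C‖ (oneNormMax 𝔸 * ‖D‖) N n := by
        simp only [word, List.prod_ofFn, mul_assoc, mul_left_comm ‖D‖]

theorem norm_wordSum_le (N m : ℕ) :
    ‖wordSum C D N m‖ ≤ oneNormMax 𝔸 * wordSum ‖C‖ (oneNormMax 𝔸 * ‖D‖) N m := by
  rw [wordSum, wordSum, mul_sum]
  exact (norm_sum_le _ _).trans (sum_le_sum fun n _ => norm_word_le C D N n)

theorem norm_expTerm_le (z : 𝕂) (p : ℕ × ℕ) :
    ‖expTerm C D z p‖ ≤ oneNormMax 𝔸 * expTerm ‖C‖ (oneNormMax 𝔸 * ‖D‖) ‖z‖ p := by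
  simp only [expTerm, norm_smul, norm_pow, norm_inv, RCLike.norm_natCast, smul_eq_mul]
  grw [norm_wordSum_le C D p.1 p.2]
  exact le_of_eq (by ring)

theorem norm_wordTerm_le (N : ℕ) (n : Fin (N + 1) → ℕ) :
    ‖wordTerm 𝕂 C D N n‖ ≤ oneNormMax 𝔸 * wordTerm ℝ ‖C‖ (oneNormMax 𝔸 * ‖D‖) N n := by
  simp only [wordTerm, norm_smul, norm_inv, RCLike.norm_natCast, smul_eq_mul]
  grw [norm_word_le C D N n]
  exact le_of_eq (by ring)

end Norm

section Analytic

variable {𝕂 𝔸 : Type*} [RCLike 𝕂] [NormedRing 𝔸] [NormedAlgebra 𝕂 𝔸] [CompleteSpace 𝔸]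
  (C D : 𝔸)

theorem summable_expTerm (z : 𝕂) : Summable (expTerm C D z) :=
  .of_norm_bounded ((summable_expTerm_real (norm_nonneg C)
    (mul_nonneg oneNormMax_nonneg (norm_nonneg D)) (norm_nonneg z)).mul_left _)
    (norm_expTerm_le C D z)

variable (𝕂) in
theorem summable_wordTerm (N : ℕ) : Summable (wordTerm 𝕂 C D N) :=
  .of_norm_bounded ((summable_wordTerm_real (norm_nonneg C)
    (mul_nonneg oneNormMax_nonneg (norm_nonneg D)) N).mul_left _)
    (norm_wordTerm_le C D N)

theorem hasSum_expTerm (z : 𝕂) : HasSum (expTerm C D z) (exp (C + z • D)) := by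
  have hsum := (summable_expTerm C D z).hasSum
  have hk := hsum.sum_finset_of_sigmaEquiv HasAntidiagonal.sigmaAntidiagonalEquivProd fun _ => rfl
  simp only [sum_antidiagonal_expTerm] at hk
  rwa [hk.unique (exp_series_hasSum_exp' (C + z • D))] at hsum

variable (𝕂) in
noncomputable def expCoeff (N : ℕ) : 𝔸 :=
  ∑' m, ((m + N)! : 𝕂)⁻¹ • wordSum C D N m

theorem hasSum_pow_smul_expCoeff (z : 𝕂) :
    HasSum (fun N => z ^ N • expCoeff 𝕂 C D N) (exp (C + z • D)) :=
  (hasSum_expTerm C D z).prod_fiberwise fun N => by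
    simpa [expTerm, expCoeff] using
      ((summable_expTerm C D (1 : 𝕂)).prod_factor N).hasSum.const_smul (z ^ N)

theorem tsum_wordTerm (N : ℕ) : ∑' n, wordTerm 𝕂 C D N n = expCoeff 𝕂 C D N := by
  have hm := (summable_wordTerm 𝕂 C D N).hasSum.sum_finset_of_sigmaEquiv
    (sigmaAntidiagonalTupleEquivTuple _) fun _ => rfl
  simp only [sum_antidiagonalTuple_wordTerm] at hm
  exact hm.tsum_eq.symm

end Analytic

end PerturbedExp

/-- Expansion of the perturbed exponential:
`(1/N!) (d/dλ)^N e^{C+λD} |_{λ=0}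
  = ∑_{n₀,…,n_N} C^{n₀} D C^{n₁} ⋯ D C^{n_N} / (n₀+⋯+n_N+N)!`. -/
theorem stmt18 {𝔸 : Type*} [NormedRing 𝔸] [NormedAlgebra ℂ 𝔸] [CompleteSpace 𝔸]
    (C D : 𝔸) (N : ℕ) :
    ((Nat.factorial N : ℂ))⁻¹ •
        iteratedDeriv N (fun lam : ℂ => exp (C + lam • D)) 0 =
      ∑' n : Fin (N + 1) → ℕ,
        ((Nat.factorial ((∑ i, n i) + N) : ℂ))⁻¹ •
          (C ^ n 0 * (List.ofFn fun i : Fin N => D * C ^ n i.succ).prod) := by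
  rw [iteratedDeriv_zero_eq_factorial_smul_of_hasSum
      (PerturbedExp.hasSum_pow_smul_expCoeff (𝕂 := ℂ) C D),
    ← Nat.cast_smul_eq_nsmul ℂ, inv_smul_smul₀ (Nat.cast_ne_zero.2 N.factorial_ne_zero)]
  exact (PerturbedExp.tsum_wordTerm (𝕂 := ℂ) C D N).symm
end
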